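/- Let f : ℝ^{m×n} → ℝ satisfy f(Y) ≤ f(X) + ⟨∇f(X), Y − X⟩ + (L/2)‖X − Y‖² where ‖·‖ is the spectral norm. Let Δ satisfy ⟨Δ, B⟩ = −η‖B‖₊² and ‖Δ‖ = η‖B‖₊ (the spectral steepest-descent step for B). Then with X' = X + Δ and the choice c = η: (η/2 − η²L/2)‖∇f(X)‖₊² ≤ 2(f(X) − f(X')) + (2η − η²L)‖∇f(X) − B‖₊². -/

import Mathlib

/-
With `a = ‖B‖₊` and `e = ‖∇f(X) - B‖₊`, the smoothness bound at `Y = X + Δ`, after splitting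
`⟨∇f(X), Δ⟩ = ⟨B, Δ⟩ + ⟨∇f(X) - B, Δ⟩` and bounding the second term by the duality
`⟨A, D⟩ ≤ ‖A‖₊ ‖D‖`, gives `f(X + Δ) ≤ f(X) - η a² + η a e + L η² a² / 2`. Together with
`‖∇f(X)‖₊ ≤ a + e` the claim reduces to `η (3 - η L) / 2 · (a - e)² ≥ 0`.

Both nuclear-norm facts come from the singular value decomposition: if `vⱼ` is an orthonormal
eigenbasis of `AᵀA`, then `⟨A, D⟩ = ∑ⱼ ⟨A vⱼ, D vⱼ⟩` and `‖A‖₊ = ∑ⱼ ‖A vⱼ‖`, and the polar factor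
`U = ∑ⱼ uⱼ vⱼᵀ`, `uⱼ = A vⱼ / ‖A vⱼ‖`, has `‖U‖ ≤ 1` and `⟨A, U⟩ = ‖A‖₊`.
-/

open Matrix MeasureTheory ProbabilityTheory

noncomputable def frob {m n : ℕ} (X : Matrix (Fin m) (Fin n) ℝ) : ℝ :=
  Real.sqrt ((Xᵀ * X).trace)

def finner {m n : ℕ} (X Y : Matrix (Fin m) (Fin n) ℝ) : ℝ :=
  (Xᵀ * Y).trace

noncomputable def spec {m n : ℕ} (X : Matrix (Fin m) (Fin n) ℝ) : ℝ :=
  ‖LinearMap.toContinuousLinearMap (Matrix.toEuclideanLin X)‖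

noncomputable def nuclear {m n : ℕ} (X : Matrix (Fin m) (Fin n) ℝ) : ℝ :=
  ∑ i, Real.sqrt ((show (Xᵀ * X).IsHermitian by
    simpa [Matrix.conjTranspose_eq_transpose_of_trivial] using
      Matrix.isHermitian_conjTranspose_mul_self X).eigenvalues i)

open scoped RealInnerProductSpace

section OrthogonalSum

variable {ι E F : Type*} [Fintype ι] [NormedAddCommGroup E] [InnerProductSpace ℝ E]
  [NormedAddCommGroup F] [InnerProductSpace ℝ F]

theorem norm_sum_smul_sq_of_pairwise_inner_eq_zero {w : ι → F}
    (hw : Pairwise fun i j => ⟪w i, w j⟫ = 0) (c : ι → ℝ) :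
    ‖∑ i, c i • w i‖ ^ 2 = ∑ i, c i ^ 2 * ‖w i‖ ^ 2 := by
  classical
  rw [← real_inner_self_eq_norm_sq, sum_inner]
  refine Finset.sum_congr rfl fun i _ => ?_
  rw [inner_sum, Finset.sum_eq_single i (fun j _ hji => by
      rw [real_inner_smul_left, real_inner_smul_right, hw hji.symm, mul_zero, mul_zero])
    (by simp), real_inner_smul_left, real_inner_smul_right, real_inner_self_eq_norm_sq]
  ring

theorem norm_sum_inner_smul_le (b : OrthonormalBasis ι ℝ E) {w : ι → F}
    (hw : Pairwise fun i j => ⟪w i, w j⟫ = 0) (hw₁ : ∀ i, ‖w i‖ ≤ 1) (x : E) :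
    ‖∑ i, ⟪b i, x⟫ • w i‖ ≤ ‖x‖ := by
  refine (pow_le_pow_iff_left₀ (norm_nonneg _) (norm_nonneg _) two_ne_zero).1 ?_
  rw [norm_sum_smul_sq_of_pairwise_inner_eq_zero hw, ← b.sum_sq_inner_right x]
  refine Finset.sum_le_sum fun i _ => ?_
  have : ‖w i‖ ^ 2 ≤ 1 := pow_le_one₀ (norm_nonneg _) (hw₁ i)
  nlinarith [sq_nonneg ⟪b i, x⟫]

end OrthogonalSum

theorem Matrix.trace_eq_sum_inner_toEuclideanLin {n : ℕ} {ι : Type*} [Fintype ι]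
    (M : Matrix (Fin n) (Fin n) ℝ) (b : OrthonormalBasis ι ℝ (EuclideanSpace ℝ (Fin n))) :
    M.trace = ∑ i, ⟪b i, toEuclideanLin M (b i)⟫ :=
  (trace_toLin_eq M (PiLp.basisFun 2 ℝ (Fin n))).symm.trans (LinearMap.trace_eq_sum_inner _ b)

section SingularValues

variable {m n : ℕ}

theorem finner_eq_sum_inner {ι : Type*} [Fintype ι] (A D : Matrix (Fin m) (Fin n) ℝ)
    (b : OrthonormalBasis ι ℝ (EuclideanSpace ℝ (Fin n))) :
    finner A D = ∑ i, ⟪toEuclideanLin A (b i), toEuclideanLin D (b i)⟫ := by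
  rw [finner, trace_eq_sum_inner_toEuclideanLin _ b, toLpLin_mul_same,
    ← conjTranspose_eq_transpose_of_trivial, toEuclideanLin_conjTranspose_eq_adjoint]
  simp only [LinearMap.comp_apply, LinearMap.adjoint_inner_right]

theorem finner_add_left (P Q D : Matrix (Fin m) (Fin n) ℝ) :
    finner (P + Q) D = finner P D + finner Q D := by
  rw [finner, finner, finner, transpose_add, Matrix.add_mul, trace_add]

theorem finner_comm (P Q : Matrix (Fin m) (Fin n) ℝ) : finner P Q = finner Q P := by
  rw [finner, finner, ← trace_transpose, transpose_mul, transpose_transpose]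

theorem spec_neg (D : Matrix (Fin m) (Fin n) ℝ) : spec (-D) = spec D := by
  rw [spec, spec, map_neg, map_neg, norm_neg]

theorem norm_toEuclideanLin_apply_le (D : Matrix (Fin m) (Fin n) ℝ)
    (x : EuclideanSpace ℝ (Fin n)) : ‖toEuclideanLin D x‖ ≤ spec D * ‖x‖ :=
  (toEuclideanLin D).toContinuousLinearMap.le_opNorm x

theorem spec_le_of_norm_apply_le (D : Matrix (Fin m) (Fin n) ℝ) {C : ℝ} (hC : 0 ≤ C)
    (h : ∀ x, ‖toEuclideanLin D x‖ ≤ C * ‖x‖) : spec D ≤ C :=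
  ContinuousLinearMap.opNorm_le_bound _ hC h

theorem isHermitian_transpose_mul_self (A : Matrix (Fin m) (Fin n) ℝ) : (Aᵀ * A).IsHermitian := by
  simpa [conjTranspose_eq_transpose_of_trivial] using isHermitian_conjTranspose_mul_self A

noncomputable def rightSingularBasis (A : Matrix (Fin m) (Fin n) ℝ) :
    OrthonormalBasis (Fin n) ℝ (EuclideanSpace ℝ (Fin n)) :=
  (isHermitian_transpose_mul_self A).eigenvectorBasis

theorem inner_toEuclideanLin_rightSingularBasis (A : Matrix (Fin m) (Fin n) ℝ) (i j : Fin n) :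
    ⟪toEuclideanLin A (rightSingularBasis A i), toEuclideanLin A (rightSingularBasis A j)⟫ =
      (isHermitian_transpose_mul_self A).eigenvalues j *
        ⟪rightSingularBasis A i, rightSingularBasis A j⟫ := by
  have key : toEuclideanLin (Aᵀ * A) (rightSingularBasis A j) =
      (isHermitian_transpose_mul_self A).eigenvalues j • rightSingularBasis A j := by
    rw [toLpLin_apply, rightSingularBasis,
      (isHermitian_transpose_mul_self A).mulVec_eigenvectorBasis]
    rfl
  rw [← LinearMap.adjoint_inner_right, ← toEuclideanLin_conjTranspose_eq_adjoint,
    conjTranspose_eq_transpose_of_trivial, ← LinearMap.comp_apply, ← toLpLin_mul_same, key,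
    real_inner_smul_right]

theorem norm_toEuclideanLin_rightSingularBasis (A : Matrix (Fin m) (Fin n) ℝ) (j : Fin n) :
    ‖toEuclideanLin A (rightSingularBasis A j)‖ =
      Real.sqrt ((isHermitian_transpose_mul_self A).eigenvalues j) := by
  rw [← Real.sqrt_sq (norm_nonneg _), ← real_inner_self_eq_norm_sq,
    inner_toEuclideanLin_rightSingularBasis, real_inner_self_eq_norm_sq,
    (rightSingularBasis A).orthonormal.norm_eq_one, one_pow, mul_one]

theorem nuclear_eq_sum_norm (A : Matrix (Fin m) (Fin n) ℝ) :
    nuclear A = ∑ j, ‖toEuclideanLin A (rightSingularBasis A j)‖ := by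
  simp only [norm_toEuclideanLin_rightSingularBasis]
  rfl

theorem nuclear_nonneg (A : Matrix (Fin m) (Fin n) ℝ) : 0 ≤ nuclear A := by
  rw [nuclear_eq_sum_norm]
  positivity

theorem finner_le_nuclear_mul_spec (A D : Matrix (Fin m) (Fin n) ℝ) :
    finner A D ≤ nuclear A * spec D := by
  rw [finner_eq_sum_inner A D (rightSingularBasis A), nuclear_eq_sum_norm, Finset.sum_mul]
  refine Finset.sum_le_sum fun j _ => ?_
  calc _ ≤ ‖toEuclideanLin A (rightSingularBasis A j)‖ *
        ‖toEuclideanLin D (rightSingularBasis A j)‖ := real_inner_le_norm _ _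
    _ ≤ ‖toEuclideanLin A (rightSingularBasis A j)‖ * spec D := by
      gcongr
      simpa [(rightSingularBasis A).orthonormal.norm_eq_one] using
        norm_toEuclideanLin_apply_le D (rightSingularBasis A j)

-- Where the singular value vanishes this is `0`, as `‖0‖⁻¹ = 0`.
noncomputable def leftSingularVec (A : Matrix (Fin m) (Fin n) ℝ) (j : Fin n) :
    EuclideanSpace ℝ (Fin m) :=
  ‖toEuclideanLin A (rightSingularBasis A j)‖⁻¹ • toEuclideanLin A (rightSingularBasis A j)

theorem pairwise_inner_leftSingularVec_eq_zero (A : Matrix (Fin m) (Fin n) ℝ) :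
    Pairwise fun i j => ⟪leftSingularVec A i, leftSingularVec A j⟫ = 0 := by
  intro i j hij
  rw [leftSingularVec, leftSingularVec, real_inner_smul_left, real_inner_smul_right,
    inner_toEuclideanLin_rightSingularBasis, (rightSingularBasis A).orthonormal.inner_eq_zero hij]
  simp

theorem norm_leftSingularVec_le_one (A : Matrix (Fin m) (Fin n) ℝ) (j : Fin n) :
    ‖leftSingularVec A j‖ ≤ 1 := by
  rw [leftSingularVec, norm_smul, norm_inv, norm_norm]
  exact inv_mul_le_one

theorem inner_toEuclideanLin_leftSingularVec (A : Matrix (Fin m) (Fin n) ℝ) (j : Fin n) :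
    ⟪toEuclideanLin A (rightSingularBasis A j), leftSingularVec A j⟫ =
      ‖toEuclideanLin A (rightSingularBasis A j)‖ := by
  rw [leftSingularVec, real_inner_smul_right, real_inner_self_eq_norm_sq]
  rcases eq_or_ne ‖toEuclideanLin A (rightSingularBasis A j)‖ 0 with h | h
  · simp [h]
  · field_simp

-- `U = ∑ⱼ uⱼ vⱼᵀ` attains `⟨A, U⟩ = ‖A‖₊` with `‖U‖ ≤ 1`, making the nuclear norm dual to the
-- spectral norm.
noncomputable def polarFactor (A : Matrix (Fin m) (Fin n) ℝ) : Matrix (Fin m) (Fin n) ℝ :=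
  toEuclideanLin.symm
    (∑ j, InnerProductSpace.rankOne ℝ (leftSingularVec A j) (rightSingularBasis A j)).toLinearMap

theorem toEuclideanLin_polarFactor_apply (A : Matrix (Fin m) (Fin n) ℝ)
    (x : EuclideanSpace ℝ (Fin n)) :
    toEuclideanLin (polarFactor A) x = ∑ j, ⟪rightSingularBasis A j, x⟫ • leftSingularVec A j := by
  simp [polarFactor]

theorem spec_polarFactor_le_one (A : Matrix (Fin m) (Fin n) ℝ) : spec (polarFactor A) ≤ 1 :=
  spec_le_of_norm_apply_le _ zero_le_one fun x => by
    rw [toEuclideanLin_polarFactor_apply, one_mul]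
    exact norm_sum_inner_smul_le (rightSingularBasis A) (pairwise_inner_leftSingularVec_eq_zero A)
      (norm_leftSingularVec_le_one A) x

theorem finner_polarFactor (A : Matrix (Fin m) (Fin n) ℝ) :
    finner A (polarFactor A) = nuclear A := by
  classical
  rw [finner_eq_sum_inner A _ (rightSingularBasis A), nuclear_eq_sum_norm]
  refine Finset.sum_congr rfl fun j _ => ?_
  simp [toEuclideanLin_polarFactor_apply, OrthonormalBasis.inner_eq_ite,
    inner_toEuclideanLin_leftSingularVec]

theorem nuclear_add_le (P Q : Matrix (Fin m) (Fin n) ℝ) :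
    nuclear (P + Q) ≤ nuclear P + nuclear Q := by
  have hU := spec_polarFactor_le_one (P + Q)
  calc nuclear (P + Q) = finner P (polarFactor (P + Q)) + finner Q (polarFactor (P + Q)) := by
        rw [← finner_add_left, finner_polarFactor]
    _ ≤ nuclear P * spec (polarFactor (P + Q)) + nuclear Q * spec (polarFactor (P + Q)) :=
      add_le_add (finner_le_nuclear_mul_spec _ _) (finner_le_nuclear_mul_spec _ _)
    _ ≤ nuclear P + nuclear Q :=
      add_le_add (mul_le_of_le_one_right (nuclear_nonneg P) hU)
        (mul_le_of_le_one_right (nuclear_nonneg Q) hU)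

theorem apply_add_le_of_steepest_descent_step (f : Matrix (Fin m) (Fin n) ℝ → ℝ)
    (g : Matrix (Fin m) (Fin n) ℝ → Matrix (Fin m) (Fin n) ℝ) (L η : ℝ)
    (hsmooth : ∀ X Y, f Y ≤ f X + finner (g X) (Y - X) + L / 2 * spec (X - Y) ^ 2)
    (X B Δ : Matrix (Fin m) (Fin n) ℝ)
    (hΔ1 : finner Δ B = -η * nuclear B ^ 2) (hΔ2 : spec Δ = η * nuclear B) :
    f (X + Δ) ≤ f X - η * nuclear B ^ 2 + η * nuclear B * nuclear (g X - B) +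
      L / 2 * (η * nuclear B) ^ 2 := by
  have hinner : finner (g X) Δ ≤ -η * nuclear B ^ 2 + nuclear (g X - B) * (η * nuclear B) := by
    calc finner (g X) Δ = finner Δ B + finner (g X - B) Δ := by
          rw [← finner_comm B, ← finner_add_left, add_sub_cancel]
      _ ≤ _ := by
        rw [hΔ1, ← hΔ2]
        gcongr
        exact finner_le_nuclear_mul_spec _ _
  have h := hsmooth X (X + Δ)
  rw [add_sub_cancel_left, sub_add_cancel_left, spec_neg, hΔ2] at h
  linarith

end SingularValues

theorem stmt18_general {m n : ℕ} (f : Matrix (Fin m) (Fin n) ℝ → ℝ)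
    (g : Matrix (Fin m) (Fin n) ℝ → Matrix (Fin m) (Fin n) ℝ)
    (L η : ℝ) (hη : 0 < η) (hηL : η * L < 1)
    (hsmooth : ∀ X Y, f Y ≤ f X + finner (g X) (Y - X) + L / 2 * spec (X - Y) ^ 2)
    (X B Δ : Matrix (Fin m) (Fin n) ℝ)
    (hΔ1 : finner Δ B = -η * nuclear B ^ 2)
    (hΔ2 : spec Δ = η * nuclear B) :
    (η / 2 - η ^ 2 * L / 2) * nuclear (g X) ^ 2 ≤
      2 * (f X - f (X + Δ)) + (2 * η - η ^ 2 * L) * nuclear (g X - B) ^ 2 := by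
  have hstep := apply_add_le_of_steepest_descent_step f g L η hsmooth X B Δ hΔ1 hΔ2
  have htri : nuclear (g X) ≤ nuclear B + nuclear (g X - B) := by
    simpa using nuclear_add_le B (g X - B)
  have hsq : nuclear (g X) ^ 2 ≤ (nuclear B + nuclear (g X - B)) ^ 2 :=
    pow_le_pow_left₀ (nuclear_nonneg _) htri 2
  have hcoef : 0 ≤ η / 2 - η ^ 2 * L / 2 := by nlinarith
  nlinarith [mul_le_mul_of_nonneg_left hsq hcoef,
    mul_nonneg (mul_nonneg hη.le (by linarith : 0 ≤ 3 - η * L))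
      (sq_nonneg (nuclear B - nuclear (g X - B)))]

/-- One step of the spectral steepest-descent scheme: if `f` satisfies the
spectral-norm quadratic upper bound with gradient `g`, and `Δ` satisfies
`⟨Δ, B⟩ = −η‖B‖₊²` and `‖Δ‖₂ = η‖B‖₊`, then (with `c = η`)
`(η/2 − η²L/2)‖g X‖₊² ≤ 2(f X − f(X + Δ)) + (2η − η²L)‖g X − B‖₊²`. -/
theorem stmt18 {m n : ℕ} (f : Matrix (Fin m) (Fin n) ℝ → ℝ)
    (g : Matrix (Fin m) (Fin n) ℝ → Matrix (Fin m) (Fin n) ℝ)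
    (L η : ℝ) (hL : 0 < L) (hη : 0 < η) (hηL : η * L < 1)
    (hsmooth : ∀ X Y, f Y ≤ f X + finner (g X) (Y - X) + L / 2 * spec (X - Y) ^ 2)
    (X B Δ : Matrix (Fin m) (Fin n) ℝ)
    (hΔ1 : finner Δ B = -η * nuclear B ^ 2)
    (hΔ2 : spec Δ = η * nuclear B) :
    (η / 2 - η ^ 2 * L / 2) * nuclear (g X) ^ 2 ≤
      2 * (f X - f (X + Δ)) + (2 * η - η ^ 2 * L) * nuclear (g X - B) ^ 2 :=
  stmt18_general f g L η hη hηL hsmooth X B Δ hΔ1 hΔ2
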